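/- arXiv:math/0510495 — 4 statements merged into one kernel-verified Lean document; each statement's English description precedes it below -/
import Mathlib

section
/- Let Φ denote the cumulative distribution function of the standard Gaussian distribution N(0,1) on ℝ. Then for every u ≥ 0, 2Φ(u) − 1 ≥ 1 − exp(−√(2/π)·u). Equivalently, if Z has a centered Gaussian distribution with variance σ² > 0, then for every ε > 0, P(|Z| > ε) ≤ exp(−√(2/π)·ε/σ). -/
/-!
Put `c = √(2/π)`. On `(0, ∞)` the functions `exp (-t²/2)` and `exp (-c t)` have the same
integral `√(π/2)`, and the first dominates the second exactly on `(0, 2c]`. A function of total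
integral zero that changes sign once, from `+` to `-`, has nonpositive integral over every tail
`(u, ∞)`; multiplied by `c` this is `2 (1 - Φ u) ≤ exp (-c u)`. For the second claim, `Z / σ`
is standard Gaussian and, by symmetry, `P(|Z| > ε) = 2 (1 - Φ (ε / σ))`.
-/

open MeasureTheory ProbabilityTheory Real
open scoped NNReal

/-- The standard Gaussian cumulative distribution function. -/
noncomputable def stdGaussianCDF (u : ℝ) : ℝ := ((gaussianReal 0 1) (Set.Iic u)).toReal

open Set

lemma setIntegral_Ioi_nonpos_of_sign_change {f : ℝ → ℝ} {a b u : ℝ}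
    (hf : IntegrableOn f (Ioi a)) (hzero : ∫ t in Ioi a, f t = 0)
    (hpos : ∀ t ∈ Ioc a b, 0 ≤ f t) (hneg : ∀ t ∈ Ioi b, f t ≤ 0) (hu : a ≤ u) :
    ∫ t in Ioi u, f t ≤ 0 := by
  rcases le_or_gt b u with hbu | hub
  · exact setIntegral_nonpos measurableSet_Ioi fun t ht => hneg t (hbu.trans_lt ht)
  · have hsplit := setIntegral_union (Ioc_disjoint_Ioi le_rfl) measurableSet_Ioi
      (hf.mono_set Ioc_subset_Ioi_self) (hf.mono_set (Ioi_subset_Ioi hu))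
    rw [Ioc_union_Ioi_eq_Ioi hu, hzero] at hsplit
    have : 0 ≤ ∫ t in Ioc a u, f t :=
      setIntegral_nonneg measurableSet_Ioc fun t ht => hpos t ⟨ht.1, ht.2.trans hub.le⟩
    linarith

lemma integral_Ioi_exp_neg_sq_half_le {u : ℝ} (hu : 0 ≤ u) :
    ∫ t in Ioi u, exp (-(1 / 2) * t ^ 2) ≤ ∫ t in Ioi u, exp (-√(2 / π) * t) := by
  set c := √(2 / π)
  have hc : 0 < c := by positivity
  have hsq : IntegrableOn (fun t => exp (-(1 / 2) * t ^ 2)) (Ioi 0) :=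
    (integrable_exp_neg_mul_sq (by norm_num)).integrableOn
  have hexp : IntegrableOn (fun t => exp (-c * t)) (Ioi 0) :=
    integrableOn_exp_mul_Ioi (by linarith) 0
  have hzero : ∫ t in Ioi 0, (exp (-(1 / 2) * t ^ 2) - exp (-c * t)) = 0 := by
    rw [integral_sub hsq hexp, integral_gaussian_Ioi, integral_exp_mul_Ioi (by linarith)]
    have hsqrt : √(π / (1 / 2)) * c = 2 := by
      rw [← sqrt_mul (by positivity), show π / (1 / 2) * (2 / π) = 2 ^ 2 by field_simp,
        sqrt_sq zero_le_two]
    rw [mul_zero, exp_zero, neg_div_neg_eq, sub_eq_zero, eq_div_iff hc.ne']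
    linarith
  have hpos : ∀ t ∈ Ioc 0 (2 * c), 0 ≤ exp (-(1 / 2) * t ^ 2) - exp (-c * t) := fun t ht =>
    sub_nonneg.2 (exp_le_exp.2 (by nlinarith [ht.1, ht.2]))
  have hneg : ∀ t ∈ Ioi (2 * c), exp (-(1 / 2) * t ^ 2) - exp (-c * t) ≤ 0 := fun t ht =>
    sub_nonpos.2 (exp_le_exp.2 (by nlinarith [mem_Ioi.1 ht]))
  have := setIntegral_Ioi_nonpos_of_sign_change
    (f := fun t => exp (-(1 / 2) * t ^ 2) - exp (-c * t)) (hsq.sub hexp) hzero hpos hneg hu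
  rwa [integral_sub (hsq.mono_set (Ioi_subset_Ioi hu)) (hexp.mono_set (Ioi_subset_Ioi hu)),
    sub_nonpos] at this

lemma gaussianReal_real_eq_integral (m : ℝ) {v : ℝ≥0} (hv : v ≠ 0) (s : Set ℝ) :
    (gaussianReal m v).real s = ∫ t in s, gaussianPDFReal m v t := by
  rw [measureReal_def, gaussianReal_apply_eq_integral m hv,
    ENNReal.toReal_ofReal (integral_nonneg fun t => gaussianPDFReal_nonneg m v t)]

lemma two_mul_gaussianPDFReal_zero_one (t : ℝ) :
    2 * gaussianPDFReal 0 1 t = √(2 / π) * exp (-(1 / 2) * t ^ 2) := by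
  have h2 : √(2 / π) = 2 * (√(2 * π))⁻¹ := by
    rw [sqrt_div zero_le_two, sqrt_mul zero_le_two]
    field_simp
    exact sq_sqrt zero_le_two
  simp only [gaussianPDFReal, h2, NNReal.coe_one, mul_one, sub_zero]
  ring_nf

lemma gaussianReal_real_Ioi (u : ℝ) : (gaussianReal 0 1).real (Ioi u) = 1 - stdGaussianCDF u := by
  rw [← compl_Iic, probReal_compl_eq_one_sub measurableSet_Iic, stdGaussianCDF, measureReal_def]

lemma two_mul_gaussianReal_real_Ioi_le {u : ℝ} (hu : 0 ≤ u) :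
    2 * (gaussianReal 0 1).real (Ioi u) ≤ exp (-√(2 / π) * u) := by
  have hc : 0 < √(2 / π) := by positivity
  calc 2 * (gaussianReal 0 1).real (Ioi u)
      = √(2 / π) * ∫ t in Ioi u, exp (-(1 / 2) * t ^ 2) := by
        simp_rw [gaussianReal_real_eq_integral 0 one_ne_zero, ← integral_const_mul,
          two_mul_gaussianPDFReal_zero_one]
    _ ≤ √(2 / π) * ∫ t in Ioi u, exp (-√(2 / π) * t) :=
        mul_le_mul_of_nonneg_left (integral_Ioi_exp_neg_sq_half_le hu) hc.le
    _ = exp (-√(2 / π) * u) := by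
        rw [integral_exp_mul_Ioi (by linarith)]
        field_simp

lemma one_sub_exp_le_two_mul_stdGaussianCDF_sub_one {u : ℝ} (hu : 0 ≤ u) :
    1 - exp (-√(2 / π) * u) ≤ 2 * stdGaussianCDF u - 1 := by
  have := two_mul_gaussianReal_real_Ioi_le hu
  rw [gaussianReal_real_Ioi] at this
  linarith

lemma gaussianReal_real_abs_gt (v : ℝ≥0) {u : ℝ} (hu : 0 ≤ u) :
    (gaussianReal 0 v).real {x | u < |x|} = 2 * (gaussianReal 0 v).real (Ioi u) := by
  have hunion : {x : ℝ | u < |x|} = (fun x => -x) ⁻¹' Ioi u ∪ Ioi u := by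
    ext x
    simp only [mem_ofPred_eq, mem_union, mem_preimage, mem_Ioi, lt_abs, or_comm]
  have hdisj : Disjoint ((fun x : ℝ => -x) ⁻¹' Ioi u) (Ioi u) :=
    disjoint_left.2 fun x hx hx' => by simp only [mem_preimage, mem_Ioi] at hx hx'; linarith
  have hsymm :
      (gaussianReal 0 v).real ((fun x => -x) ⁻¹' Ioi u) = (gaussianReal 0 v).real (Ioi u) := by
    rw [← map_measureReal_apply measurable_neg measurableSet_Ioi, gaussianReal_map_neg, neg_zero]
  rw [hunion, measureReal_union hdisj measurableSet_Ioi, hsymm, two_mul]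

lemma gaussianReal_abs_gt_eq {v : ℝ≥0} (hv : v ≠ 0) (ε : ℝ) :
    gaussianReal 0 v {x | ε < |x|} = gaussianReal 0 1 {x | ε / √(v : ℝ) < |x|} := by
  have hσ : 0 < √(v : ℝ) := sqrt_pos.2 (by positivity)
  have hstd : (gaussianReal 0 v).map (· / √(v : ℝ)) = gaussianReal 0 1 := by
    rw [gaussianReal_map_div_const, zero_div]
    congr
    ext
    simp [sq_sqrt v.coe_nonneg, hv]
  rw [← hstd, Measure.map_apply (measurable_div_const _)
    (measurableSet_lt measurable_const measurable_abs)]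
  congr 1
  ext x
  simp only [mem_preimage, mem_ofPred_eq, abs_div, abs_of_pos hσ, div_lt_div_iff_of_pos_right hσ]

theorem stmt9_general {Ω : Type*} [MeasurableSpace Ω] (μ : Measure Ω)
    (Z : Ω → ℝ) (v : ℝ≥0) (hv : 0 < v)
    (hZ : Measure.map Z μ = gaussianReal 0 v) :
    (∀ u : ℝ, 0 ≤ u →
      1 - Real.exp (-(Real.sqrt (2 / π)) * u) ≤ 2 * stdGaussianCDF u - 1) ∧
    (∀ ε : ℝ, 0 < ε →
      (μ {ω | ε < |Z ω|}).toReal ≤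
        Real.exp (-(Real.sqrt (2 / π)) * ε / Real.sqrt (v : ℝ))) := by
  refine ⟨fun _ => one_sub_exp_le_two_mul_stdGaussianCDF_sub_one, fun ε hε => ?_⟩
  have hZm : AEMeasurable Z μ := aemeasurable_of_map_neZero (by rw [hZ]; infer_instance)
  have hεσ : 0 ≤ ε / √(v : ℝ) := by positivity
  have hlaw : μ {ω | ε < |Z ω|} = gaussianReal 0 1 {x | ε / √(v : ℝ) < |x|} := by
    rw [← gaussianReal_abs_gt_eq hv.ne', ← hZ,
      Measure.map_apply_of_aemeasurable hZm (measurableSet_lt measurable_const measurable_abs)]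
    rfl
  rw [hlaw, ← measureReal_def, gaussianReal_real_abs_gt 1 hεσ, mul_div_assoc]
  exact two_mul_gaussianReal_real_Ioi_le hεσ

theorem stmt9 {Ω : Type*} [MeasurableSpace Ω] (μ : Measure Ω) [IsProbabilityMeasure μ]
    (Z : Ω → ℝ) (v : ℝ≥0) (hv : 0 < v)
    (hZ : Measure.map Z μ = gaussianReal 0 v) :
    (∀ u : ℝ, 0 ≤ u →
      1 - Real.exp (-(Real.sqrt (2 / π)) * u) ≤ 2 * stdGaussianCDF u - 1) ∧
    (∀ ε : ℝ, 0 < ε →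
      (μ {ω | ε < |Z ω|}).toReal ≤
        Real.exp (-(Real.sqrt (2 / π)) * ε / Real.sqrt (v : ℝ))) :=
  stmt9_general μ Z v hv hZ
end

section
/- Let (v_n)_{n≥1} be a sequence of strictly positive real numbers such that n^κ v_n → 0 as n → ∞ for some κ > 0, and let c > 0. Then the series ∑_{n≥1} ( 1 − (1 − exp(−c/√(v_n)))^n ) converges. -/
/-!
Eventually `v n ≤ n ^ (-κ)`, so `exp (-c / √(v n)) ≤ exp (-c n ^ (κ/2))`, and Bernoulli's inequality
bounds the `n`-th term by `n exp (-c n ^ (κ/2))`. This stretched-exponential decay beats every power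
of `n`, in particular `n ^ (-2)`.
-/

open Filter Real Topology

theorem one_sub_one_sub_pow_le {x : ℝ} (hx : x ≤ 2) (n : ℕ) : 1 - (1 - x) ^ n ≤ n * x := by
  have := one_add_mul_le_pow (a := -x) (by linarith) n
  rw [← sub_eq_add_neg] at this
  linarith

theorem summable_rpow_mul_exp_neg_mul_rpow (s : ℝ) {c p : ℝ} (hc : 0 < c) (hp : 0 < p) :
    Summable fun n : ℕ => (n : ℝ) ^ s * exp (-c * (n : ℝ) ^ p) := by
  have hdecay : Tendsto (fun x : ℝ => x ^ (s + 2) * exp (-c * x ^ p)) atTop (𝓝 0) := by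
    refine ((tendsto_rpow_mul_exp_neg_mul_atTop_nhds_zero ((s + 2) / p) c hc).comp
      (tendsto_rpow_atTop hp)).congr' ?_
    filter_upwards [eventually_ge_atTop 0] with x hx
    rw [Function.comp_apply, ← rpow_mul hx, mul_div_cancel₀ _ hp.ne']
  have hle : ∀ᶠ n : ℕ in atTop, (n : ℝ) ^ (s + 2) * exp (-c * (n : ℝ) ^ p) ≤ 1 :=
    tendsto_natCast_atTop_atTop.eventually (hdecay.eventually (ge_mem_nhds one_pos))
  refine (summable_nat_rpow.mpr (by norm_num : (-2 : ℝ) < -1)).of_norm_bounded_eventually_nat ?_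
  filter_upwards [hle, eventually_ge_atTop 1] with n hn hn1
  have hpos : (0 : ℝ) < n := by exact_mod_cast hn1
  calc ‖(n : ℝ) ^ s * exp (-c * (n : ℝ) ^ p)‖
      = (n : ℝ) ^ (-2 : ℝ) * ((n : ℝ) ^ (s + 2) * exp (-c * (n : ℝ) ^ p)) := by
        rw [norm_of_nonneg (by positivity), ← mul_assoc, ← rpow_add hpos]
        ring_nf
    _ ≤ (n : ℝ) ^ (-2 : ℝ) := mul_le_of_le_one_right (by positivity) hn

theorem exp_neg_div_sqrt_le_exp_neg_mul {c v t : ℝ} (hc : 0 ≤ c) (hv : 0 < v) (ht : 0 ≤ t)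
    (h : t ^ 2 * v ≤ 1) : exp (-c / √v) ≤ exp (-c * t) := by
  have hsv : 0 < √v := sqrt_pos.mpr hv
  have htsv : t * √v ≤ 1 := by
    rw [← sqrt_sq ht, ← sqrt_mul (sq_nonneg t)]
    exact sqrt_le_one.mpr h
  rw [exp_le_exp, neg_div, neg_mul, neg_le_neg_iff, le_div_iff₀ hsv, mul_assoc]
  exact mul_le_of_le_one_right hc htsv

theorem stmt10 (v : ℕ → ℝ) (hv : ∀ n, 1 ≤ n → 0 < v n)
    (κ : ℝ) (hκ : 0 < κ)
    (hlim : Tendsto (fun n : ℕ => (n : ℝ) ^ κ * v n) atTop (nhds 0))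
    (c : ℝ) (hc : 0 < c) :
    Summable (fun n : ℕ =>
      1 - (1 - Real.exp (-c / Real.sqrt (v (n + 1)))) ^ (n + 1)) := by
  have hexp : ∀ᶠ n : ℕ in atTop, exp (-c / √(v n)) ≤ exp (-c * (n : ℝ) ^ (κ / 2)) := by
    filter_upwards [hlim.eventually (ge_mem_nhds one_pos), eventually_ge_atTop 1] with n hn hn1
    refine exp_neg_div_sqrt_le_exp_neg_mul hc.le (hv n hn1) (by positivity) ?_
    rwa [← rpow_natCast, ← rpow_mul n.cast_nonneg, Nat.cast_ofNat, div_mul_cancel₀ _ two_ne_zero]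
  suffices Summable fun n : ℕ => 1 - (1 - exp (-c / √(v n))) ^ n from
    (summable_nat_add_iff 1).mpr this
  refine (summable_rpow_mul_exp_neg_mul_rpow 1 hc (half_pos hκ)).of_norm_bounded_eventually_nat ?_
  filter_upwards [hexp] with n hn
  have hE₀ : 0 ≤ exp (-c / √(v n)) := (exp_pos _).le
  have hE₁ : exp (-c / √(v n)) ≤ 1 :=
    exp_le_one_iff.mpr (div_nonpos_of_nonpos_of_nonneg (neg_nonpos.mpr hc.le) (sqrt_nonneg _))
  rw [norm_of_nonneg (sub_nonneg.mpr (pow_le_one₀ (by linarith) (by linarith))), rpow_one]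
  exact (one_sub_one_sub_pow_le (by linarith) n).trans (mul_le_mul_of_nonneg_left hn n.cast_nonneg)
end

section
/- Let x < y be real numbers and f : ℝ → ℝ. Suppose that there exists L > 0 such that the sums ∑_{k=1}^n ( f(x + k·(y−x)/n) − f(x + (k−1)·(y−x)/n) )² converge to L as n → ∞. Then for no ε > 1/2 and C ≥ 0 does f satisfy |f(u) − f(v)| ≤ C·|u − v|^ε for all u, v ∈ [x,y]. -/
open Filter

theorem stmt12 (x y : ℝ) (hxy : x < y) (f : ℝ → ℝ) (L : ℝ) (hL : 0 < L)
    (hlim : Tendsto (fun n : ℕ =>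
        ∑ k ∈ Finset.Icc 1 n,
          (f (x + (k : ℝ) * ((y - x) / n)) - f (x + ((k : ℝ) - 1) * ((y - x) / n))) ^ 2)
      atTop (nhds L)) :
    ¬ ∃ ε : ℝ, 1 / 2 < ε ∧ ∃ C : ℝ, 0 ≤ C ∧
      ∀ u ∈ Set.Icc x y, ∀ v ∈ Set.Icc x y, |f u - f v| ≤ C * |u - v| ^ ε := by
  rintro ⟨ε, hε, C, hC, hH⟩
  set d : ℝ := y - x with hd
  have hdpos : 0 < d := by simp [hd]; linarith
  -- the bounding sequence tends to 0
  have hexp : (1 : ℝ) - 2 * ε < 0 := by linarith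
  have hB : Tendsto (fun n : ℕ => C ^ 2 * d ^ (2 * ε) * (n : ℝ) ^ (1 - 2 * ε))
      atTop (nhds 0) := by
    have h1 : Tendsto (fun n : ℕ => (n : ℝ) ^ (1 - 2 * ε)) atTop (nhds 0) := by
      have h := (tendsto_rpow_neg_atTop (y := 2 * ε - 1) (by linarith)).comp
        (tendsto_natCast_atTop_atTop (R := ℝ))
      simp only [Function.comp, neg_sub] at h
      exact h
    simpa using (h1.const_mul (C ^ 2 * d ^ (2 * ε)))
  -- the sums are eventually bounded
  have hub : ∀ n : ℕ, 1 ≤ n →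
      (∑ k ∈ Finset.Icc 1 n,
          (f (x + (k : ℝ) * (d / n)) - f (x + ((k : ℝ) - 1) * (d / n))) ^ 2)
        ≤ C ^ 2 * d ^ (2 * ε) * (n : ℝ) ^ (1 - 2 * ε) := by
    intro n hn
    have hnpos : (0 : ℝ) < n := by exact_mod_cast hn
    have hdn : 0 < d / n := div_pos hdpos hnpos
    have key : ∀ k ∈ Finset.Icc 1 n,
        (f (x + (k : ℝ) * (d / n)) - f (x + ((k : ℝ) - 1) * (d / n))) ^ 2
          ≤ C ^ 2 * (d / n) ^ (2 * ε) := by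
      intro k hk
      simp only [Finset.mem_Icc] at hk
      have hk1 : (1 : ℝ) ≤ k := by exact_mod_cast hk.1
      have hkn : (k : ℝ) ≤ n := by exact_mod_cast hk.2
      have hmem : ∀ t : ℝ, 0 ≤ t → t ≤ n → x + t * (d / n) ∈ Set.Icc x y := by
        intro t ht htn
        constructor
        · nlinarith
        · have : t * (d / n) ≤ n * (d / n) := by
            apply mul_le_mul_of_nonneg_right htn hdn.le
          have hnd : (n : ℝ) * (d / n) = d := by field_simp
          simp [hd] at *; nlinarith [this, hnd]
      have ha := hmem k (by linarith) hkn
      have hb := hmem ((k : ℝ) - 1) (by linarith) (by linarith)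
      have habs : |f (x + (k : ℝ) * (d / n)) - f (x + ((k : ℝ) - 1) * (d / n))|
          ≤ C * (d / n) ^ ε := by
        have := hH _ ha _ hb
        have hdiff : (x + (k : ℝ) * (d / n)) - (x + ((k : ℝ) - 1) * (d / n)) = d / n := by
          ring
        rwa [hdiff, abs_of_pos hdn] at this
      calc (f (x + (k : ℝ) * (d / n)) - f (x + ((k : ℝ) - 1) * (d / n))) ^ 2
          = |f (x + (k : ℝ) * (d / n)) - f (x + ((k : ℝ) - 1) * (d / n))| ^ 2 := by
            rw [sq_abs]
        _ ≤ (C * (d / n) ^ ε) ^ 2 := by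
            apply pow_le_pow_left₀ (abs_nonneg _) habs
        _ = C ^ 2 * (d / n) ^ (2 * ε) := by
            rw [mul_pow, ← Real.rpow_natCast ((d / n) ^ ε) 2, ← Real.rpow_mul hdn.le]
            norm_num [mul_comm]
    calc (∑ k ∈ Finset.Icc 1 n,
            (f (x + (k : ℝ) * (d / n)) - f (x + ((k : ℝ) - 1) * (d / n))) ^ 2)
        ≤ ∑ k ∈ Finset.Icc 1 n, C ^ 2 * (d / n) ^ (2 * ε) :=
          Finset.sum_le_sum key
      _ = n * (C ^ 2 * (d / n) ^ (2 * ε)) := by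
          rw [Finset.sum_const, Nat.card_Icc]
          simp [nsmul_eq_mul]
      _ = C ^ 2 * d ^ (2 * ε) * (n : ℝ) ^ (1 - 2 * ε) := by
          rw [Real.div_rpow hdpos.le hnpos.le, Real.rpow_sub hnpos, Real.rpow_one]
          field_simp
  -- squeeze: the sums tend to 0
  have hlb : ∀ n : ℕ, 0 ≤ ∑ k ∈ Finset.Icc 1 n,
      (f (x + (k : ℝ) * (d / n)) - f (x + ((k : ℝ) - 1) * (d / n))) ^ 2 :=
    fun n => Finset.sum_nonneg fun k _ => sq_nonneg _
  have h0 : Tendsto (fun n : ℕ =>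
      ∑ k ∈ Finset.Icc 1 n,
        (f (x + (k : ℝ) * (d / n)) - f (x + ((k : ℝ) - 1) * (d / n))) ^ 2)
      atTop (nhds 0) := by
    apply squeeze_zero' (Eventually.of_forall hlb) _ hB
    filter_upwards [eventually_ge_atTop 1] with n hn using hub n hn
  have := tendsto_nhds_unique hlim h0
  linarith
end

section
/- Let 0 ≤ r < s and x < y be real numbers, and let n ≥ (y−x)/(s−r) be a positive integer; set δ = (y−x)/n. For 1 ≤ k ≤ n and u ∈ {r, s}, define the rectangle F^n_k(u) = [0,u] × [u + x + (k−1)δ, u + x + kδ] ⊂ ℝ². Then for all 1 ≤ k, l ≤ n, at least one of the sets F^n_k(r) ∩ F^n_l(s) and F^n_l(r) ∩ F^n_k(s) has two-dimensional Lebesgue measure zero. -/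
open MeasureTheory Set

lemma aux_null (a b c d : ℝ) (h : b ≤ c) : volume (Icc a b ∩ Icc c d) = 0 := by
  rw [Icc_inter_Icc, Real.volume_Icc, ENNReal.ofReal_eq_zero]
  have h1 : min b d ≤ b := min_le_left _ _
  have h2 : c ≤ max a c := le_max_right _ _
  linarith

theorem stmt13 (r s x y : ℝ) (hr : 0 ≤ r) (hrs : r < s) (hxy : x < y)
    (n : ℕ) (hn : 1 ≤ n) (hn' : (y - x) / (s - r) ≤ (n : ℝ)) :
    ∀ k l : ℕ, 1 ≤ k → k ≤ n → 1 ≤ l → l ≤ n →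
      volume
          ((Icc (0 : ℝ) r ×ˢ
              Icc (r + x + ((k : ℝ) - 1) * ((y - x) / n)) (r + x + (k : ℝ) * ((y - x) / n))) ∩
            (Icc (0 : ℝ) s ×ˢ
              Icc (s + x + ((l : ℝ) - 1) * ((y - x) / n)) (s + x + (l : ℝ) * ((y - x) / n)))) = 0 ∨
      volume
          ((Icc (0 : ℝ) r ×ˢ
              Icc (r + x + ((l : ℝ) - 1) * ((y - x) / n)) (r + x + (l : ℝ) * ((y - x) / n))) ∩
            (Icc (0 : ℝ) s ×ˢ
              Icc (s + x + ((k : ℝ) - 1) * ((y - x) / n)) (s + x + (k : ℝ) * ((y - x) / n)))) = 0 := by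
  intro k l hk hkn hl hln
  have hn0 : (0:ℝ) < n := by exact_mod_cast hn
  set δ : ℝ := (y - x) / n with hδ
  have hδpos : 0 < δ := div_pos (by linarith) hn0
  have hsr : 0 < s - r := by linarith
  have hδle : δ ≤ s - r := by
    rw [hδ, div_le_iff₀ hn0]
    have := (div_le_iff₀ hsr).mp hn'
    nlinarith
  rcases le_total k l with h | h
  · left
    have hkl : (k:ℝ) ≤ l := by exact_mod_cast h
    have hb : r + x + (k:ℝ) * δ ≤ s + x + ((l:ℝ) - 1) * δ := by nlinarith
    rw [prod_inter_prod, Measure.volume_eq_prod, Measure.prod_prod,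
      aux_null _ _ _ _ hb, mul_zero]
  · right
    have hkl : (l:ℝ) ≤ k := by exact_mod_cast h
    have hb : r + x + (l:ℝ) * δ ≤ s + x + ((k:ℝ) - 1) * δ := by nlinarith
    rw [prod_inter_prod, Measure.volume_eq_prod, Measure.prod_prod,
      aux_null _ _ _ _ hb, mul_zero]
end
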